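/- arXiv:2210.10590 — 6 statements merged into one kernel-verified Lean document; each statement's English description precedes it below -/
import Mathlib

section
/- If a graph G of order n has minimum degree sum over non-adjacent vertex pairs at least n-1 (i.e., σ(G) ≥ n−1), then G is traceable (has a Hamiltonian path). -/
open Finset SimpleGraph

/-!
Two non-adjacent vertices have degree sum at least `n - 1`, so they have a common neighbour and
`G` is connected. Grow a path `v₀ … vₖ` one vertex at a time while `k + 1 < n`. If an end has a
neighbour off the path, append it. Otherwise all neighbours of `v₀` and `vₖ` lie on the path, and
either `vₖ ~ v₀`, or `deg v₀ + deg vₖ ≥ n - 1 > k` forces an index `i < k` with `v₀ ~ vᵢ₊₁` and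
`vₖ ~ vᵢ`, so that `v₀ … vᵢ vₖ … vᵢ₊₁` is a cycle. Either way the path's vertices carry a cycle;
by connectivity some vertex of it has a neighbour `w` off the path, and opening the cycle there
gives a path through these vertices and `w`.
-/

lemma List.Nodup.head?_ne_getLast? {α : Type*} {l : List α} {u v : α} (hnd : l.Nodup)
    (hlen : 2 ≤ l.length) (hu : l.head? = some u) (hv : l.getLast? = some v) : u ≠ v := by
  rw [List.head?_eq_getElem?, List.getElem?_eq_some_iff] at hu
  rw [List.getLast?_eq_getElem?, List.getElem?_eq_some_iff] at hv
  obtain ⟨_, rfl⟩ := hu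
  obtain ⟨_, rfl⟩ := hv
  rw [Ne, hnd.getElem_inj_iff]
  omega

namespace SimpleGraph

variable {V : Type*} {G : SimpleGraph V}

def IsClosedChain (G : SimpleGraph V) (c : List V) : Prop :=
  c.IsChain G.Adj ∧ ∀ a ∈ c.getLast?, ∀ b ∈ c.head?, G.Adj a b

lemma Preconnected.exists_adj_of_mem_of_notMem (hG : G.Preconnected) {S : Set V} {u v : V}
    (hu : u ∈ S) (hv : v ∉ S) : ∃ x ∈ S, ∃ y ∉ S, G.Adj x y := by
  obtain ⟨p⟩ := hG u v
  obtain ⟨d, -, hd₁, hd₂⟩ := p.exists_boundary_dart S hu hv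
  exact ⟨_, hd₁, _, hd₂, d.adj⟩

lemma IsClosedChain.exists_isChain_perm_cons {c : List V} (hc : G.IsClosedChain c) {x w : V}
    (hx : x ∈ c) (hxw : G.Adj x w) : ∃ l : List V, l.IsChain G.Adj ∧ l.Perm (w :: c) := by
  obtain ⟨s, t, rfl⟩ := List.append_of_mem hx
  obtain ⟨hchain, hclosed⟩ := hc
  obtain ⟨hs, ht, -⟩ := List.isChain_append.1 hchain
  refine ⟨w :: (x :: t ++ s), List.isChain_cons.2 ⟨by simpa using hxw.symm, ?_⟩,
    List.perm_append_comm.cons w⟩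
  refine List.isChain_append.2 ⟨ht, hs, fun a ha b hb => hclosed a ?_ b ?_⟩
  · simpa using ha
  · rw [Option.mem_def, List.head?_append, Option.mem_def.1 hb, Option.some_or]

lemma isClosedChain_append_reverse {s t : List V} (hs : s ≠ []) (ht : t ≠ [])
    (h : (s ++ t).IsChain G.Adj) (hst : ∀ a ∈ s.getLast?, ∀ b ∈ t.getLast?, G.Adj a b)
    (hts : ∀ a ∈ t.head?, ∀ b ∈ s.head?, G.Adj a b) : G.IsClosedChain (s ++ t.reverse) := by
  obtain ⟨hs', ht', -⟩ := List.isChain_append.1 h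
  refine ⟨List.isChain_append.2 ⟨hs', List.isChain_reverse.2 (ht'.imp fun _ _ h => h.symm),
    fun a ha b hb => hst a ha b (by simpa using hb)⟩, fun a ha b hb => hts a ?_ b ?_⟩
  · simpa [ht] using ha
  · simpa [hs] using hb

variable [Fintype V] [DecidableRel G.Adj]

lemma degree_le_card_filter [DecidableEq V] {ι : Type*} {v : V} {s : Finset ι} {f : ι → V}
    (h : ∀ y, G.Adj v y → ∃ i ∈ s, f i = y) : G.degree v ≤ #{i ∈ s | G.Adj v (f i)} := by
  rw [← card_neighborFinset_eq_degree]
  calc #(G.neighborFinset v) ≤ #({i ∈ s | G.Adj v (f i)}.image f) := by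
        refine card_le_card fun y hy => ?_
        obtain ⟨i, hi, rfl⟩ := h y ((G.mem_neighborFinset v y).1 hy)
        exact mem_image_of_mem f (mem_filter.2 ⟨hi, (G.mem_neighborFinset v _).1 hy⟩)
    _ ≤ _ := card_image_le

lemma exists_adj_getElem?_of_length_le_degree_add_degree [DecidableEq V] {l : List V} {u v : V}
    (hu : l.head? = some u) (hv : l.getLast? = some v)
    (hNu : ∀ y, G.Adj u y → y ∈ l) (hNv : ∀ y, G.Adj v y → y ∈ l)
    (hdeg : l.length ≤ G.degree u + G.degree v) :
    ∃ i a b, l[i]? = some a ∧ l[i + 1]? = some b ∧ G.Adj v a ∧ G.Adj u b := by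
  set k := l.length - 1
  have hlen : l.length = k + 1 := by
    have := List.length_pos_iff.2 (List.ne_nil_of_mem (List.mem_of_mem_head? hu))
    omega
  set f : ℕ → V := fun i => l.getD i u
  have hf : ∀ {j y}, l[j]? = some y → f j = y := fun h => by simp [f, h]
  have hget : ∀ j < l.length, l[j]? = some (f j) := fun j hj => by
    simp [f, List.getElem?_eq_getElem hj]
  have hNu' : ∀ y, G.Adj u y → ∃ i ∈ range k, f (i + 1) = y := by
    intro y hy
    obtain ⟨j, hj⟩ := List.mem_iff_getElem?.1 (hNu y hy)
    have hjl : j < l.length := (List.getElem?_eq_some_iff.1 hj).1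
    have hj0 : j ≠ 0 := by
      rintro rfl
      rw [← List.head?_eq_getElem?, hu, Option.some_inj] at hj
      exact G.loopless.irrefl u (hj ▸ hy)
    exact ⟨j - 1, mem_range.2 (by omega), by rw [Nat.sub_add_cancel (by omega)]; exact hf hj⟩
  have hNv' : ∀ y, G.Adj v y → ∃ i ∈ range k, f i = y := by
    intro y hy
    obtain ⟨j, hj⟩ := List.mem_iff_getElem?.1 (hNv y hy)
    have hjl : j < l.length := (List.getElem?_eq_some_iff.1 hj).1
    have hjk : j ≠ k := by
      rintro rfl
      rw [← List.getLast?_eq_getElem?, hv, Option.some_inj] at hj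
      exact G.loopless.irrefl v (hj ▸ hy)
    exact ⟨j, mem_range.2 (by omega), hf hj⟩
  obtain ⟨i, hi⟩ := inter_nonempty_of_card_lt_card_add_card
    (t := {i ∈ range k | G.Adj u (f (i + 1))}) (u := {i ∈ range k | G.Adj v (f i)})
    (filter_subset _ _) (filter_subset _ _) (by
      have := degree_le_card_filter (f := fun i => f (i + 1)) hNu'
      have := degree_le_card_filter hNv'
      rw [card_range]
      omega)
  simp only [mem_inter, mem_filter, mem_range] at hi
  obtain ⟨⟨hik, hub⟩, -, hva⟩ := hi
  exact ⟨i, f i, f (i + 1), hget i (by omega), hget (i + 1) (by omega), hva, hub⟩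

lemma exists_isClosedChain_perm [DecidableEq V] {l : List V} {u v : V} (hl : l.IsChain G.Adj)
    (hu : l.head? = some u) (hv : l.getLast? = some v)
    (hNu : ∀ y, G.Adj u y → y ∈ l) (hNv : ∀ y, G.Adj v y → y ∈ l)
    (hdeg : l.length ≤ G.degree u + G.degree v) :
    ∃ c : List V, G.IsClosedChain c ∧ c.Perm l := by
  obtain ⟨i, a, b, ha, hb, hva, hub⟩ :=
    exists_adj_getElem?_of_length_le_degree_add_degree hu hv hNu hNv hdeg
  have hi : i + 1 < l.length := (List.getElem?_eq_some_iff.1 hb).1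
  refine ⟨l.take (i + 1) ++ (l.drop (i + 1)).reverse,
    isClosedChain_append_reverse (List.ne_nil_of_length_pos (by simp; omega))
      (List.ne_nil_of_length_pos (by simp; omega))
      (by rwa [List.take_append_drop]) ?_ ?_, ?_⟩
  · intro a' ha' v' hv'
    rw [List.getLast?_take, if_neg (by omega), Nat.add_sub_cancel, ha, Option.some_or,
      Option.mem_some_iff] at ha'
    rw [List.getLast?_drop, if_neg (by omega), hv, Option.mem_some_iff] at hv'
    exact ha' ▸ hv' ▸ hva.symm
  · intro b' hb' u' hu'
    rw [List.head?_drop, hb, Option.mem_some_iff] at hb'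
    rw [List.head?_take, if_neg (by omega), hu, Option.mem_some_iff] at hu'
    exact hb' ▸ hu' ▸ hub.symm
  · calc (l.take (i + 1) ++ (l.drop (i + 1)).reverse).Perm (l.take (i + 1) ++ l.drop (i + 1)) :=
          (List.reverse_perm _).append_left _
      _ = l := List.take_append_drop _ _

lemma exists_adj_adj_of_card_sub_one_le_degree_add_degree [DecidableEq V] {u v : V} (huv : u ≠ v)
    (hadj : ¬ G.Adj u v) (h : Fintype.card V - 1 ≤ G.degree u + G.degree v) :
    ∃ w, G.Adj u w ∧ G.Adj w v := by
  have hu : G.neighborFinset u ⊆ (univ.erase u).erase v := fun y hy => by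
    rw [mem_neighborFinset] at hy
    simp only [mem_erase, mem_univ, and_true]
    exact ⟨fun h => hadj (h ▸ hy), hy.ne'⟩
  have hv : G.neighborFinset v ⊆ (univ.erase u).erase v := fun y hy => by
    rw [mem_neighborFinset] at hy
    simp only [mem_erase, mem_univ, and_true]
    exact ⟨hy.ne', fun h => hadj (h ▸ hy.symm)⟩
  have hcard : #((univ.erase u).erase v) = Fintype.card V - 2 := by
    rw [card_erase_of_mem (by simpa using huv.symm), card_erase_of_mem (mem_univ u), card_univ]
    rfl
  have htwo : 2 ≤ Fintype.card V := Fintype.one_lt_card_iff.2 ⟨u, v, huv⟩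
  obtain ⟨w, hw⟩ := inter_nonempty_of_card_lt_card_add_card hu hv (by
    simp only [hcard, card_neighborFinset_eq_degree]
    omega)
  rw [mem_inter, mem_neighborFinset, mem_neighborFinset] at hw
  exact ⟨w, hw.1, hw.2.symm⟩

lemma preconnected_of_card_sub_one_le_degree_add_degree [DecidableEq V]
    (hσ : ∀ u v : V, u ≠ v → ¬ G.Adj u v → Fintype.card V - 1 ≤ G.degree u + G.degree v) :
    G.Preconnected := by
  intro u v
  by_cases huv : u = v
  · exact huv ▸ Reachable.refl u
  by_cases hadj : G.Adj u v
  · exact hadj.reachable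
  obtain ⟨w, huw, hwv⟩ :=
    exists_adj_adj_of_card_sub_one_le_degree_add_degree huv hadj (hσ u v huv hadj)
  exact huw.reachable.trans hwv.reachable

lemma exists_isChain_perm_cons_of_length_lt [DecidableEq V]
    (hσ : ∀ u v : V, u ≠ v → ¬ G.Adj u v → Fintype.card V - 1 ≤ G.degree u + G.degree v)
    {l : List V} (hl : l.IsChain G.Adj) (hnd : l.Nodup) (hne : l ≠ [])
    (hlt : l.length < Fintype.card V) :
    ∃ w ∉ l, ∃ l' : List V, l'.IsChain G.Adj ∧ l'.Perm (w :: l) := by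
  obtain ⟨y, hy⟩ : ∃ y, y ∉ l := by
    by_contra! h
    have := card_le_card (fun y _ => List.mem_toFinset.2 (h y) : univ ⊆ l.toFinset)
    have := l.toFinset_card_le
    rw [card_univ] at *
    omega
  have hG := preconnected_of_card_sub_one_le_degree_add_degree hσ
  obtain ⟨x, hx, w, hw, hxw⟩ :=
    hG.exists_adj_of_mem_of_notMem (S := {v | v ∈ l}) (List.head_mem hne) hy
  obtain ⟨u, hu⟩ : ∃ u, l.head? = some u := Option.ne_none_iff_exists'.1 (by simpa using hne)
  obtain ⟨v, hv⟩ : ∃ v, l.getLast? = some v := Option.ne_none_iff_exists'.1 (by simpa using hne)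
  by_cases hNu : ∃ w ∉ l, G.Adj u w
  · obtain ⟨w, hw, huw⟩ := hNu
    exact ⟨w, hw, w :: l, List.isChain_cons.2 ⟨by simpa [hu] using huw.symm, hl⟩, .refl _⟩
  by_cases hNv : ∃ w ∉ l, G.Adj v w
  · obtain ⟨w, hw, hvw⟩ := hNv
    exact ⟨w, hw, w :: l.reverse, List.isChain_cons.2 ⟨by simpa [hv] using hvw.symm,
      List.isChain_reverse.2 (hl.imp fun _ _ h => h.symm)⟩, (List.reverse_perm l).cons w⟩
  obtain ⟨c, hc, hcl⟩ : ∃ c, G.IsClosedChain c ∧ c.Perm l := by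
    by_cases hvu : G.Adj v u
    · exact ⟨l, ⟨hl, by simp [hu, hv, hvu]⟩, .refl l⟩
    have hlen : 2 ≤ l.length := by
      by_contra! h
      have := List.length_pos_iff.2 hne
      obtain ⟨a, rfl⟩ := List.length_eq_one_iff.1 (show l.length = 1 by omega)
      simp only [List.mem_singleton, List.head?_cons, Option.some_inj] at hx hu
      exact hNu ⟨w, hw, hu ▸ hx ▸ hxw⟩
    have := hσ u v (hnd.head?_ne_getLast? hlen hu hv) fun h => hvu h.symm
    exact exists_isClosedChain_perm hl hu hv (fun y hy => by_contra fun h => hNu ⟨y, h, hy⟩)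
      (fun y hy => by_contra fun h => hNv ⟨y, h, hy⟩) (by omega)
  obtain ⟨l', hl', hperm⟩ := hc.exists_isChain_perm_cons (hcl.mem_iff.2 hx) hxw
  exact ⟨w, hw, l', hl', hperm.trans (hcl.cons w)⟩

lemma exists_isChain_nodup_length_eq_card [DecidableEq V] [Nonempty V]
    (hσ : ∀ u v : V, u ≠ v → ¬ G.Adj u v → Fintype.card V - 1 ≤ G.degree u + G.degree v) :
    ∃ l : List V, l.IsChain G.Adj ∧ l.Nodup ∧ l.length = Fintype.card V := by
  suffices ∀ m, 1 ≤ m → m ≤ Fintype.card V →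
      ∃ l : List V, l.IsChain G.Adj ∧ l.Nodup ∧ l.length = m from
    this _ Fintype.card_pos le_rfl
  intro m hm
  induction m, hm using Nat.le_induction with
  | base => exact fun _ => ⟨[Classical.arbitrary V], .singleton _, List.nodup_singleton _, rfl⟩
  | succ m hm ih =>
    intro hmn
    obtain ⟨l, hl, hnd, rfl⟩ := ih (by omega)
    obtain ⟨w, hw, l', hl', hperm⟩ :=
      exists_isChain_perm_cons_of_length_lt hσ hl hnd (List.ne_nil_of_length_pos hm) hmn
    exact ⟨l', hl', hperm.nodup_iff.2 (hnd.cons hw), hperm.length_eq⟩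

end SimpleGraph

/-- If a graph `G` of order `n` satisfies `σ(G) ≥ n - 1` (the sum of the degrees of any two
non-adjacent vertices is at least `n - 1`), then `G` is traceable, i.e. has a Hamiltonian path. -/
theorem sigma_ge_sub_one_traceable {V : Type} [Fintype V] [Nonempty V] [DecidableEq V]
    (G : SimpleGraph V) [DecidableRel G.Adj]
    (hσ : ∀ u v : V, u ≠ v → ¬ G.Adj u v →
      Fintype.card V - 1 ≤ G.degree u + G.degree v) :
    ∃ (u v : V) (p : G.Walk u v), p.IsHamiltonian := by
  obtain ⟨l, hl, hnd, hlen⟩ := exists_isChain_nodup_length_eq_card hσ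
  have hne : l ≠ [] := List.ne_nil_of_length_pos (hlen ▸ Fintype.card_pos)
  exact ⟨_, _, Walk.ofSupport l hne hl, Walk.isHamiltonian_iff_isPath_and_length_eq.2
    ⟨.mk' (by rwa [Walk.support_ofSupport]), by rw [Walk.length_ofSupport, hlen]⟩⟩
end

section
/- Let G be a complete multipartite graph of order n. Then G has a Hamiltonian path if and only if its independence number satisfies α(G) ≤ ⌈n/2⌉. -/
/-!
In a Hamiltonian path of `completeMultipartiteGraph V` consecutive vertices lie in different
parts, so no part occupies two consecutive positions and each part has at most `⌈n/2⌉`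
vertices; an independent set with two or more vertices lies inside a single part.
Conversely, if every part has at most `⌈n/2⌉` vertices, the vertices can be ordered two at a
time: take any vertex `x` and a vertex `y` from a largest part other than the part of `x`,
order the remaining vertices recursively, and put `x y` or `y x` in front.
-/

open Finset SimpleGraph

theorem Finset.countP_toList {α : Type*} (s : Finset α) (p : α → Prop) [DecidablePred p] :
    s.toList.countP (fun a => decide (p a)) = (s.filter p).card := by
  rw [← Multiset.coe_countP, coe_toList, Multiset.countP_eq_card_filter]
  rfl

namespace List

variable {α β : Type*} [DecidableEq β] (f : α → β)

theorem countP_le_of_isChain_ne (b : β) :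
    ∀ {l : List α}, l.IsChain (fun x y => f x ≠ f y) →
      l.countP (fun x => f x = b) ≤ (l.length + 1) / 2
  | [], _ => by simp
  | [x], _ => by by_cases hx : f x = b <;> simp [hx]
  | x :: y :: t, h => by
    have ih := countP_le_of_isChain_ne b h.of_cons.of_cons
    have hxy : ¬(f x = b ∧ f y = b) := fun ⟨hx, hy⟩ => h.rel (hx.trans hy.symm)
    simp only [countP_cons, length_cons, decide_eq_true_eq]
    split_ifs with hy hx <;> first | omega | exact absurd ⟨hx, hy⟩ hxy

theorem countP_add_countP_le_length {l : List α} {b c : β} (hbc : b ≠ c) :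
    l.countP (fun x => f x = b) + l.countP (fun x => f x = c) ≤ l.length := by
  rw [length_eq_countP_add_countP (fun x => f x = c), add_comm]
  gcongr
  exact countP_mono_left fun x _ hx => by simp_all

theorem countP_le_of_perm_cons_cons {l r : List α} {x y : α} (hl : l ~ x :: y :: r)
    (h : ∀ b, l.countP (fun a => f a = b) ≤ (l.length + 1) / 2)
    (hmax : ∀ z ∈ r, f z ≠ f x →
      (y :: r).countP (fun a => f a = f z) ≤ (y :: r).countP (fun a => f a = f y)) (b : β) :
    r.countP (fun a => f a = b) ≤ (r.length + 1) / 2 := by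
  have hb := h b
  rw [hl.countP_eq, hl.length_eq] at hb
  simp only [countP_cons, length_cons, decide_eq_true_eq] at hb
  by_cases hbxy : f x = b ∨ f y = b
  · rcases hbxy with hbx | hby <;> split_ifs at hb <;> omega
  obtain ⟨hbx, hby⟩ := not_or.1 hbxy
  rcases Nat.eq_zero_or_pos (r.countP fun a => f a = b) with h0 | hpos
  · omega
  -- `b` is no more frequent than `f y`, and both colours together fit into `y :: r`.
  obtain ⟨z, hzr, hzb⟩ := countP_pos_iff.1 hpos
  rw [decide_eq_true_eq] at hzb
  have hle := hmax z hzr (hzb ▸ Ne.symm hbx)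
  have hsum := countP_add_countP_le_length f (l := y :: r) (Ne.symm hby)
  simp only [countP_cons, hzb, hby, decide_eq_true_eq, if_false, if_true, length_cons] at hle hsum
  omega

theorem exists_mem_ne_of_countP_le {x w : α} {t : List α}
    (h : (x :: w :: t).countP (fun a => f a = f x) ≤ ((x :: w :: t).length + 1) / 2) :
    ∃ z ∈ w :: t, f z ≠ f x := by
  by_contra! hall
  have hcount : (x :: w :: t).countP (fun a => f a = f x) = (x :: w :: t).length :=
    countP_eq_length.2 fun z hz => by
      rcases mem_cons.1 hz with rfl | hz
      · simp
      · simpa using hall z hz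
  simp only [hcount, length_cons] at h
  omega

theorem exists_perm_cons_cons_isChain_ne {x y : α} (hxy : f x ≠ f y) :
    ∀ {r : List α}, r.IsChain (fun a b => f a ≠ f b) →
      ∃ l, l ~ x :: y :: r ∧ l.IsChain (fun a b => f a ≠ f b)
  | [], _ => ⟨[x, y], Perm.refl _, .cons_cons hxy (.singleton y)⟩
  | z :: r, hr => by
    by_cases hyz : f y = f z
    · exact ⟨y :: x :: z :: r, Perm.swap .., .cons_cons hxy.symm (.cons_cons (hyz ▸ hxy) hr)⟩
    · exact ⟨x :: y :: z :: r, Perm.refl _, .cons_cons hxy (.cons_cons hyz hr)⟩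

theorem exists_perm_isChain_ne {l : List α}
    (h : ∀ b, l.countP (fun a => f a = b) ≤ (l.length + 1) / 2) :
    ∃ l', l' ~ l ∧ l'.IsChain (fun a b => f a ≠ f b) := by
  classical
  match l, h with
  | [], _ => exact ⟨[], Perm.refl _, .nil⟩
  | [x], _ => exact ⟨[x], Perm.refl _, .singleton x⟩
  | x :: w :: t, h =>
    obtain ⟨z, hz, hzx⟩ := exists_mem_ne_of_countP_le f (h (f x))
    obtain ⟨y, hy, hymax⟩ := ((w :: t).toFinset.filter fun z => f z ≠ f x).exists_max_image
      (fun z => (w :: t).countP fun a => f a = f z) ⟨z, by simpa [hzx] using hz⟩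
    obtain ⟨hyt, hyx⟩ : y ∈ w :: t ∧ f y ≠ f x := by simpa using hy
    set r := (w :: t).erase y
    have ht : w :: t ~ y :: r := perm_cons_erase hyt
    have hmax (z : α) (hz : z ∈ r) (hzx : f z ≠ f x) :
        (y :: r).countP (fun a => f a = f z) ≤ (y :: r).countP (fun a => f a = f y) := by
      simpa only [ht.countP_eq] using hymax z (by simpa [hzx] using erase_subset hz)
    have hlen : r.length = t.length := by simp [r, length_erase_of_mem hyt]
    obtain ⟨r', hr'r, hr'⟩ :=
      exists_perm_isChain_ne (countP_le_of_perm_cons_cons f (ht.cons x) h hmax)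
    obtain ⟨l', hl', hchain⟩ := exists_perm_cons_cons_isChain_ne f hyx.symm hr'
    exact ⟨l', hl'.trans (((hr'r.cons y).trans ht.symm).cons x), hchain⟩
termination_by l.length
decreasing_by exact Nat.lt_succ_of_le (hlen.trans_le t.length.le_succ)

theorem exists_perm_isChain_ne_iff {l : List α} :
    (∃ l', l' ~ l ∧ l'.IsChain (fun a b => f a ≠ f b)) ↔
      ∀ b, l.countP (fun a => f a = b) ≤ (l.length + 1) / 2 :=
  ⟨fun ⟨_, hl, hc⟩ b => hl.countP_eq _ ▸ hl.length_eq ▸ countP_le_of_isChain_ne f b hc,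
    exists_perm_isChain_ne f⟩

end List

namespace SimpleGraph

variable {V : Type*} [Fintype V] [DecidableEq V] {G : SimpleGraph V}

theorem Walk.isHamiltonian_iff_support_perm {u v : V} (p : G.Walk u v) :
    p.IsHamiltonian ↔ p.support.Perm univ.toList := by
  simp only [Walk.IsHamiltonian, List.perm_iff_count,
    List.count_eq_one_of_mem (nodup_toList _) (mem_toList.2 (mem_univ _))]

theorem exists_isHamiltonian_iff_exists_perm_isChain [Nonempty V] :
    (∃ (u v : V) (p : G.Walk u v), p.IsHamiltonian) ↔
      ∃ l : List V, l.Perm univ.toList ∧ l.IsChain G.Adj := by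
  simp only [Walk.isHamiltonian_iff_support_perm]
  constructor
  · rintro ⟨u, v, p, hp⟩
    exact ⟨p.support, hp, p.isChain_adj_support⟩
  · rintro ⟨l, hl, hchain⟩
    have hne : l ≠ [] := List.ne_nil_of_length_pos <| by
      rw [hl.length_eq, length_toList]
      exact card_pos.2 univ_nonempty
    exact ⟨_, _, .ofSupport l hne hchain, by rwa [Walk.support_ofSupport]⟩

end SimpleGraph

namespace SimpleGraph.completeMultipartiteGraph

variable {ι : Type*} {V : ι → Type*}

theorem isIndepSet_iff (s : Set (Σ i, V i)) :
    (completeMultipartiteGraph V).IsIndepSet s ↔ ∀ a ∈ s, ∀ b ∈ s, a.1 = b.1 := by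
  simp only [IsIndepSet, Set.Pairwise, comap_adj, top_adj, not_not]
  exact ⟨fun h a ha b hb => (eq_or_ne a b).elim (congrArg _) (h ha hb),
    fun h a ha b hb _ => h a ha b hb⟩

theorem forall_isIndepSet_card_le_iff [Fintype ι] [DecidableEq ι] [∀ i, Fintype (V i)]
    {m : ℕ} :
    (∀ s : Finset (Σ i, V i), (completeMultipartiteGraph V).IsIndepSet s → s.card ≤ m) ↔
      ∀ i, (univ.filter fun a : Σ i, V i => a.1 = i).card ≤ m := by
  refine ⟨fun h i => h _ ?_, fun h s hs => ?_⟩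
  · rw [isIndepSet_iff]
    intro a ha b hb
    simp_all
  · obtain rfl | ⟨a, ha⟩ := s.eq_empty_or_nonempty
    · simp
    · refine (card_le_card fun b hb => ?_).trans (h a.1)
      simpa using ((isIndepSet_iff _).1 hs b hb a ha)

end SimpleGraph.completeMultipartiteGraph

/-- A complete multipartite graph of order `n` has a Hamiltonian path if and only if its
independence number is at most `⌈n/2⌉`. -/
theorem completeMultipartite_traceable_iff {ι : Type} [Fintype ι] [DecidableEq ι]
    (V : ι → Type) [∀ i, Fintype (V i)] [∀ i, DecidableEq (V i)]
    [Nonempty (Σ i, V i)] :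
    (∃ (u v : Σ i, V i) (p : (completeMultipartiteGraph V).Walk u v), p.IsHamiltonian) ↔
      (∀ s : Finset (Σ i, V i),
        (∀ a ∈ s, ∀ b ∈ s, a ≠ b → ¬ (completeMultipartiteGraph V).Adj a b) →
        s.card ≤ (Fintype.card (Σ i, V i) + 1) / 2) := by
  rw [exists_isHamiltonian_iff_exists_perm_isChain]
  refine (List.exists_perm_isChain_ne_iff Sigma.fst).trans ?_
  rw [length_toList, card_univ]
  simp only [countP_toList]
  exact completeMultipartiteGraph.forall_isIndepSet_card_le_iff.symm
end

section
/- If G is a graph of order n ≥ 3 with σ(G) ≥ n, then G is Hamiltonian (Ore's theorem). -/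
/-!
A Hamiltonian path or cycle of a graph on `n + 1` vertices is encoded as a copy of
`pathGraph (n + 1)` or `cycleGraph (n + 1)` in it.

Ore's condition survives adding edges, so by downward induction on `G` (complete graphs being
Hamiltonian) we may assume that `G ⊔ uv` has a Hamiltonian cycle for a non-edge `uv`. Either that
cycle avoids `uv`, or removing `uv` leaves a Hamiltonian path `p₀ … pₙ` of `G` from `u` to `v`.
The sets `{i | u ~ pᵢ₊₁}` and `{i | v ~ pᵢ}` lie in `[0, n)` and have sizes `deg u` and `deg v`,
whose sum is at least `n + 1`; so they share an `i`, and `p₀ … pᵢ pₙ pₙ₋₁ … pᵢ₊₁` is a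
Hamiltonian cycle of `G`.
-/

open Finset SimpleGraph

namespace SimpleGraph

lemma cycleGraph_adj_add_left {n : ℕ} {a x y : Fin (n + 1)} :
    (cycleGraph (n + 1)).Adj (a + x) (a + y) ↔ (cycleGraph (n + 1)).Adj x y := by
  simp only [cycleGraph_adj', add_sub_add_left_eq_sub]

lemma val_cases_of_cycleGraph_adj {n : ℕ} {x y : Fin (n + 1)}
    (h : (cycleGraph (n + 1)).Adj x y) :
    x.val + 1 = y.val ∨ y.val + 1 = x.val ∨
      (x.val = 0 ∧ y.val = n) ∨ (x.val = n ∧ y.val = 0) := by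
  have sub_eq_one : ∀ a b : Fin (n + 1), (a - b).val = 1 →
      b.val + 1 = a.val ∨ (a.val = 0 ∧ b.val = n) := by
    intro a b hab
    rcases le_or_gt b a with hle | hlt
    · rw [Fin.sub_val_of_le hle] at hab
      omega
    · rw [Fin.coe_sub_iff_lt.mpr hlt] at hab
      omega
  rcases cycleGraph_adj'.mp h with h | h
  · have := sub_eq_one x y h
    omega
  · have := sub_eq_one y x h
    omega

lemma sym2_eq_of_adj_sup_edge {V : Type*} {G : SimpleGraph V} {u v a b : V}
    (h : (G ⊔ edge u v).Adj a b) (hG : ¬ G.Adj a b) : s(a, b) = s(u, v) := by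
  rcases h with h | h
  · exact absurd h hG
  · exact Sym2.eq_iff.mpr ((edge_adj u v a b).mp h).1

variable {W : Type*} {G : SimpleGraph W}

lemma cycleGraph_isContained_or_exists_pathGraph_copy {u v : W} {n : ℕ} (hn : 2 ≤ n)
    (c : Copy (cycleGraph (n + 1)) (G ⊔ edge u v)) :
    cycleGraph (n + 1) ⊑ G ∨
      ∃ p : Copy (pathGraph (n + 1)) G, s(p 0, p (Fin.last n)) = s(u, v) := by
  by_cases hG : ∀ x y, (cycleGraph (n + 1)).Adj x y → G.Adj (c x) (c y)
  · exact Or.inl ⟨Hom.toCopy ⟨c, hG _ _⟩ c.injective⟩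
  right
  push Not at hG
  obtain ⟨x, y, hxy, hnG⟩ := hG
  have huv : s(c x, c y) = s(u, v) := sym2_eq_of_adj_sup_edge (c.toHom.map_adj hxy) hnG
  wlog hxy' : x.val + 1 = y.val ∨ (x.val = n ∧ y.val = 0) generalizing x y
  · refine this y x hxy.symm (fun h => hnG h.symm) (by rw [Sym2.eq_swap, huv]) ?_
    have := val_cases_of_cycleGraph_adj hxy
    omega
  -- walk around the cycle starting at `y`, so that the missing edge joins the two ends
  have hwrap : y + Fin.last n = x := by
    ext
    rw [Fin.val_add, Fin.val_last]
    rcases hxy' with h | ⟨hx, hy⟩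
    · rw [← h, add_assoc, add_comm 1, Nat.add_mod_right, Nat.mod_eq_of_lt x.isLt]
    · rw [hx, hy, zero_add, Nat.mod_eq_of_lt (Nat.lt_succ_self n)]
  let t : Fin (n + 1) → W := fun k => c (y + k)
  have ht : Function.Injective t := c.injective.comp (add_right_injective y)
  have hends : s(t (Fin.last n), t 0) = s(u, v) := by simpa [t, hwrap] using huv
  have hadj : ∀ {k k'}, (pathGraph (n + 1)).Adj k k' → G.Adj (t k) (t k') := by
    intro k k' hk
    by_contra hnk
    have hcyc := cycleGraph_adj_add_left (a := y) |>.mpr (pathGraph_le_cycleGraph hk)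
    have hkk' : s(k, k') = s(Fin.last n, 0) := Sym2.map.injective ht
      (by simpa [hends] using sym2_eq_of_adj_sup_edge (c.toHom.map_adj hcyc) hnk)
    rw [pathGraph_adj] at hk
    rcases Sym2.eq_iff.mp hkk' with ⟨rfl, rfl⟩ | ⟨rfl, rfl⟩ <;>
      simp only [Fin.val_last, Fin.val_zero] at hk <;> omega
  exact ⟨Hom.toCopy ⟨t, hadj⟩ ht, by simpa [t, hwrap, Sym2.eq_swap] using huv⟩

lemma cycleGraph_isContained_of_crossing {n : ℕ} (p : Copy (pathGraph (n + 1)) G)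
    {i j : Fin (n + 1)} (hij : i.val + 1 = j.val)
    (hj : G.Adj (p 0) (p j)) (hi : G.Adj (p (Fin.last n)) (p i)) : cycleGraph (n + 1) ⊑ G := by
  -- the cycle `p 0, …, p i, p n, p (n - 1), …, p j`
  let σ : Fin (n + 1) → Fin (n + 1) := fun k => if k ≤ i then k else i - k
  have hσ : ∀ k, (σ k).val = if k.val ≤ i.val then k.val else n + 1 + i.val - k.val := by
    intro k
    by_cases hk : k ≤ i
    · simp [σ, hk, Fin.le_def.mp hk]
    · simp [σ, hk, Fin.coe_sub_iff_lt.mpr (not_le.mp hk), Fin.le_def.not.mp hk]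
  have hσ_inj : Function.Injective σ := by
    intro a b hab
    have := congrArg Fin.val hab
    rw [hσ, hσ] at this
    ext
    split_ifs at this <;> omega
  have hstep : ∀ a b : Fin (n + 1), a.val + 1 = b.val ∨ (a.val = i.val ∧ b.val = n) ∨
      (a.val = 0 ∧ b.val = j.val) → G.Adj (p a) (p b) := by
    rintro a b (h | ⟨ha, hb⟩ | ⟨ha, hb⟩)
    · exact p.toHom.map_adj (pathGraph_adj.mpr (Or.inl h))
    · rw [Fin.ext ha, show b = Fin.last n from Fin.ext hb]
      exact hi.symm
    · rw [show a = 0 from Fin.ext ha, Fin.ext hb]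
      exact hj
  have hadj : ∀ {x y}, (cycleGraph (n + 1)).Adj x y → G.Adj (p (σ x)) (p (σ y)) := by
    intro x y hxy
    have hx := hσ x
    have hy := hσ y
    have := val_cases_of_cycleGraph_adj hxy
    have := j.isLt
    by_cases hxy' : (σ x).val + 1 = (σ y).val ∨ ((σ x).val = i.val ∧ (σ y).val = n) ∨
        ((σ x).val = 0 ∧ (σ y).val = j.val)
    · exact hstep _ _ hxy'
    · refine (hstep _ _ ?_).symm
      split_ifs at hx hy <;> omega
  exact ⟨Hom.toCopy ⟨p ∘ σ, hadj⟩ (p.injective.comp hσ_inj)⟩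

lemma exists_crossing_of_card_le_degree_add_degree [Fintype W] [DecidableRel G.Adj] {n : ℕ}
    (p : Copy (pathGraph (n + 1)) G) (hcard : Fintype.card W = n + 1)
    (hdeg : n + 1 ≤ G.degree (p 0) + G.degree (p (Fin.last n))) :
    ∃ i j : Fin (n + 1), i.val + 1 = j.val ∧
      G.Adj (p 0) (p j) ∧ G.Adj (p (Fin.last n)) (p i) := by
  let e : Fin (n + 1) ≃ W := Equiv.ofBijective p
    ((Fintype.bijective_iff_injective_and_card p).mpr ⟨p.injective, by simp [hcard]⟩)
  have he : ∀ w, p (e.symm w) = w := e.apply_symm_apply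
  have hfirst : ∀ w, G.Adj (p 0) w → (e.symm w).val ≠ 0 := by
    intro w hw h0
    rw [← he w, show e.symm w = 0 from Fin.ext h0] at hw
    exact hw.ne rfl
  have hlast : ∀ w, G.Adj (p (Fin.last n)) w → (e.symm w).val ≠ n := by
    intro w hw hn
    rw [← he w, show e.symm w = Fin.last n from Fin.ext hn] at hw
    exact hw.ne rfl
  let S := (G.neighborFinset (p 0)).image fun w => (e.symm w).val - 1
  let T := (G.neighborFinset (p (Fin.last n))).image fun w => (e.symm w).val
  have hS : S ⊆ range n := by
    simp only [S, subset_iff, mem_image, mem_neighborFinset, mem_range]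
    rintro _ ⟨w, hw, rfl⟩
    have := hfirst w hw
    omega
  have hT : T ⊆ range n := by
    simp only [T, subset_iff, mem_image, mem_neighborFinset, mem_range]
    rintro _ ⟨w, hw, rfl⟩
    have := hlast w hw
    omega
  have hS_card : #S = G.degree (p 0) := by
    rw [card_image_of_injOn, card_neighborFinset_eq_degree]
    intro w hw w' hw' hww'
    simp only [coe_neighborFinset, mem_neighborSet] at hw hw' hww'
    have := hfirst w hw
    have := hfirst w' hw'
    exact e.symm.injective (Fin.ext (by omega))
  have hT_card : #T = G.degree (p (Fin.last n)) :=
    (card_image_of_injective _ (Fin.val_injective.comp e.symm.injective)).trans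
      (card_neighborFinset_eq_degree _ _)
  obtain ⟨k, hk⟩ := inter_nonempty_of_card_lt_card_add_card hS hT (by rw [card_range]; omega)
  simp only [S, T, mem_inter, mem_image, mem_neighborFinset] at hk
  obtain ⟨⟨a, ha, rfl⟩, ⟨b, hb, hba⟩⟩ := hk
  have := hfirst a ha
  exact ⟨e.symm b, e.symm a, by omega, by rwa [he], by rwa [he]⟩

lemma cycleGraph_isContained_of_pathGraph_copy [Fintype W] [DecidableRel G.Adj] {n : ℕ}
    (p : Copy (pathGraph (n + 1)) G) (hcard : Fintype.card W = n + 1)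
    (hdeg : n + 1 ≤ G.degree (p 0) + G.degree (p (Fin.last n))) : cycleGraph (n + 1) ⊑ G :=
  let ⟨_, _, hij, hj, hi⟩ := exists_crossing_of_card_le_degree_add_degree p hcard hdeg
  cycleGraph_isContained_of_crossing p hij hj hi

lemma isHamiltonian_of_cycleGraph_isContained [Fintype W] [DecidableEq W]
    (hW : 3 ≤ Fintype.card W) (h : cycleGraph (Fintype.card W) ⊑ G) : G.IsHamiltonian := by
  obtain ⟨a, p, hp, hlen⟩ := (cycleGraph_isContained_iff hW).mp h
  exact fun _ => ⟨a, p, Walk.isHamiltonianCycle_iff_isCycle_and_length_eq.mpr ⟨hp, hlen⟩⟩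

variable {V : Type} [Fintype V]

/-- Ore's condition `σ(G) ≥ |V|`. -/
def OreCondition (G : SimpleGraph V) [DecidableRel G.Adj] : Prop :=
  ∀ u v : V, u ≠ v → ¬ G.Adj u v → Fintype.card V ≤ G.degree u + G.degree v

lemma OreCondition.mono {G H : SimpleGraph V} [DecidableRel G.Adj] [DecidableRel H.Adj]
    (hGH : G ≤ H) (hG : G.OreCondition) : H.OreCondition := fun u v huv hnadj =>
  (hG u v huv (fun h => hnadj (hGH h))).trans
    (add_le_add (degree_le_of_le hGH) (degree_le_of_le hGH))

theorem OreCondition.cycleGraph_isContained [DecidableEq V] {n : ℕ}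
    (hcard : Fintype.card V = n + 1) (hn : 2 ≤ n) (G : SimpleGraph V)
    [inst : DecidableRel G.Adj] (hG : G.OreCondition) :
    cycleGraph (n + 1) ⊑ G := by
  induction G using WellFoundedGT.induction generalizing inst with
  | _ G ih =>
  by_cases hcomplete : ∀ u v : V, u ≠ v → G.Adj u v
  · obtain rfl : G = ⊤ := eq_top_iff.mpr fun u v => hcomplete u v
    exact isContained_top_iff.mpr
      ⟨((finCongr hcard.symm).trans (Fintype.equivFin V).symm).toEmbedding⟩
  push Not at hcomplete
  obtain ⟨u, v, huv, hnadj⟩ := hcomplete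
  have hlt : G < G ⊔ edge u v :=
    left_lt_sup.mpr fun h => hnadj (h ((edge_adj u v u v).mpr ⟨Or.inl ⟨rfl, rfl⟩, huv⟩))
  rcases cycleGraph_isContained_or_exists_pathGraph_copy hn
      (ih _ hlt (hG.mono le_sup_left)).some with h | ⟨p, hp⟩
  · exact h
  · refine cycleGraph_isContained_of_pathGraph_copy p hcard ?_
    have hσ := hG u v huv hnadj
    rcases Sym2.eq_iff.mp hp with ⟨h0, hl⟩ | ⟨h0, hl⟩ <;> rw [h0, hl] <;> omega

end SimpleGraph

/-- Ore's theorem: if `G` is a graph of order `n ≥ 3` such that any two non-adjacent vertices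
have degree sum at least `n`, then `G` is Hamiltonian. -/
theorem ore_hamiltonian {V : Type} [Fintype V] [DecidableEq V]
    (G : SimpleGraph V) [DecidableRel G.Adj]
    (hn : 3 ≤ Fintype.card V)
    (hσ : ∀ u v : V, u ≠ v → ¬ G.Adj u v → Fintype.card V ≤ G.degree u + G.degree v) :
    G.IsHamiltonian := by
  obtain ⟨n, hcard⟩ : ∃ n, Fintype.card V = n + 1 := Nat.exists_eq_add_one.mpr (by omega)
  refine isHamiltonian_of_cycleGraph_isContained hn ?_
  rw [hcard]
  exact OreCondition.cycleGraph_isContained hcard (by omega) G hσ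
end

section
/- A connected graph G of order n is recursively partitionable if and only if G ≅ K_1, or for every pair of positive integers a, b with a+b = n there is a partition {A,B} of V(G) with |A| = a, |B| = b, and both G[A] and G[B] recursively partitionable. -/
open Finset

/-- `G.IsRP A` : the subgraph of `G` induced by the vertex set `A` is recursively
partitionable (RP): either `|A| = 1`, or `G[A]` is connected and for every integer partition
`a₁, …, a_k` (with `k ≥ 2`) of `|A|` there is a partition of `A` into parts of exactly these
sizes, each of which again induces an RP subgraph.  (The guard `B.card < A.card` is
automatically satisfied by every part of such a partition; it is only needed for
well-foundedness of the recursion.) -/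
def SimpleGraph.IsRP {V : Type} [DecidableEq V] (G : SimpleGraph V) (A : Finset V) : Prop :=
  A.card = 1 ∨ ((G.induce (A : Set V)).Connected ∧
    ∀ l : List ℕ, (∀ a ∈ l, 0 < a) → 2 ≤ l.length → l.sum = A.card →
      ∃ P : List (Finset V), P.map Finset.card = l ∧ P.Pairwise _root_.Disjoint ∧
        P.foldr (· ∪ ·) ∅ = A ∧ ∀ B ∈ P, ∀ _ : B.card < A.card, G.IsRP B)
termination_by A.card

/-! An RP set admits a partition into RP parts for every composition of its size, including
the trivial one-part composition. Hence a composition `a :: t` with `2 ≤ length` can be realised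
from a binary split `(a, Σ t)` by partitioning the RP complement according to `t`; conversely a
binary split is the case of a two-part composition. -/

namespace List

lemma lt_sum_of_mem {l : List ℕ} (hpos : ∀ x ∈ l, 0 < x) (hlen : 2 ≤ l.length) {x : ℕ}
    (hx : x ∈ l) : x < l.sum := by
  have hperm := perm_cons_erase hx
  have hne : l.erase x ≠ [] := by
    rw [← length_pos_iff, length_erase_of_mem hx]; omega
  have hrest : 0 < (l.erase x).sum :=
    sum_pos _ (fun y hy => hpos y (mem_of_mem_erase hy)) hne
  rw [hperm.sum_eq, sum_cons]
  omega

lemma subset_foldr_union {V : Type} [DecidableEq V] {P : List (Finset V)} {B : Finset V}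
    (hB : B ∈ P) : B ⊆ P.foldr (· ∪ ·) ∅ := by
  induction P with
  | nil => simp at hB
  | cons C Q ih =>
    rcases mem_cons.mp hB with rfl | hB
    · exact Finset.subset_union_left
    · exact (ih hB).trans Finset.subset_union_right

end List

namespace SimpleGraph

variable {V : Type} [DecidableEq V] (G : SimpleGraph V)

def IsRPPartition (A : Finset V) (P : List (Finset V)) : Prop :=
  P.Pairwise Disjoint ∧ P.foldr (· ∪ ·) ∅ = A ∧ ∀ B ∈ P, G.IsRP B

variable {G}

lemma isRPPartition_singleton {A : Finset V} (hA : G.IsRP A) : G.IsRPPartition A [A] := by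
  simp [IsRPPartition, hA]

lemma IsRPPartition.cons {A B : Finset V} {P : List (Finset V)} (hBA : B ⊆ A) (hB : G.IsRP B)
    (hP : G.IsRPPartition (A \ B) P) : G.IsRPPartition A (B :: P) := by
  obtain ⟨hdisj, hunion, hparts⟩ := hP
  refine ⟨List.pairwise_cons.mpr ⟨fun C hC => ?_, hdisj⟩, ?_, ?_⟩
  · exact disjoint_sdiff.mono_right (hunion ▸ List.subset_foldr_union hC)
  · rw [List.foldr_cons, hunion, Finset.union_sdiff_of_subset hBA]
  · rintro C (_ | ⟨_, hC⟩)
    exacts [hB, hparts C hC]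

lemma IsRPPartition.eq_sdiff_of_pair {A B C : Finset V} (h : G.IsRPPartition A [B, C]) :
    B ⊆ A ∧ C = A \ B := by
  obtain ⟨hdisj, hunion, -⟩ := h
  simp only [List.foldr_cons, List.foldr_nil, Finset.union_empty] at hunion
  subst hunion
  exact ⟨Finset.subset_union_left,
    (Finset.union_sdiff_cancel_left (List.pairwise_pair.mp hdisj)).symm⟩

/-- The size guard in `IsRP` is vacuous: every part of a partition into at least two nonempty
parts is smaller than the whole. -/
lemma isRP_iff {A : Finset V} :
    G.IsRP A ↔ A.card = 1 ∨ ((G.induce (A : Set V)).Connected ∧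
      ∀ l : List ℕ, (∀ a ∈ l, 0 < a) → 2 ≤ l.length → l.sum = A.card →
        ∃ P : List (Finset V), P.map Finset.card = l ∧ G.IsRPPartition A P) := by
  rw [IsRP]
  refine or_congr_right (and_congr_right fun _ => forall_congr' fun l => ?_)
  refine imp_congr_right fun hpos => imp_congr_right fun hlen => imp_congr_right fun hsum => ?_
  refine exists_congr fun P => and_congr_right fun hmap => ?_
  have hlt : ∀ B ∈ P, B.card < A.card := fun B hB =>
    hsum ▸ List.lt_sum_of_mem hpos hlen (hmap ▸ List.mem_map_of_mem hB)
  exact and_congr_right fun _ => and_congr_right fun _ =>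
    ⟨fun h B hB => h B hB (hlt B hB), fun h B hB _ => h B hB⟩

lemma IsRP.exists_isRPPartition {A : Finset V} (hA : G.IsRP A) {l : List ℕ}
    (hpos : ∀ a ∈ l, 0 < a) (hne : l ≠ []) (hsum : l.sum = A.card) :
    ∃ P : List (Finset V), P.map Finset.card = l ∧ G.IsRPPartition A P := by
  by_cases hlen : 2 ≤ l.length
  · have hcard : A.card ≠ 1 := by
      have := List.length_le_sum_of_one_le l hpos
      omega
    exact ((isRP_iff.mp hA).resolve_left hcard).2 l hpos hlen hsum
  · obtain ⟨a, rfl⟩ : ∃ a, l = [a] := by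
      have : l.length = 1 := by have := List.length_pos_iff.mpr hne; omega
      exact List.length_eq_one_iff.mp this
    exact ⟨[A], by simpa using hsum.symm, isRPPartition_singleton hA⟩

theorem isRP_iff_exists_split {A : Finset V} :
    G.IsRP A ↔ A.card = 1 ∨ ((G.induce (A : Set V)).Connected ∧
      ∀ a b : ℕ, 0 < a → 0 < b → a + b = A.card →
        ∃ B ⊆ A, B.card = a ∧ (A \ B).card = b ∧ G.IsRP B ∧ G.IsRP (A \ B)) := by
  rw [isRP_iff]
  refine or_congr_right (and_congr_right fun _ => ⟨fun hsplit a b ha hb hab => ?_,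
    fun hsplit l hpos hlen hsum => ?_⟩)
  · obtain ⟨P, hmap, hP⟩ := hsplit [a, b] (by simp [ha, hb]) (by simp) (by simp [hab])
    obtain ⟨B, C, rfl⟩ : ∃ B C, P = [B, C] := by
      match P, hmap with | [B, C], _ => exact ⟨B, C, rfl⟩
    obtain ⟨hBA, rfl⟩ := hP.eq_sdiff_of_pair
    simp only [List.map_cons, List.map_nil, List.cons.injEq, and_true] at hmap
    exact ⟨B, hBA, hmap.1, hmap.2, hP.2.2 B (by simp), hP.2.2 _ (by simp)⟩
  · obtain _ | ⟨a, t⟩ := l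
    · simp at hlen
    have htpos : ∀ x ∈ t, 0 < x := fun x hx => hpos x (List.mem_cons_of_mem a hx)
    have htne : t ≠ [] := by rintro rfl; simp at hlen
    obtain ⟨B, hBA, hBcard, hrest, hB, hAB⟩ := hsplit a t.sum (hpos a List.mem_cons_self)
      (List.sum_pos t htpos htne) (by simpa using hsum)
    obtain ⟨P, hmap, hP⟩ := hAB.exists_isRPPartition htpos htne hrest.symm
    exact ⟨B :: P, by simp [hmap, hBcard], hP.cons hBA hB⟩

end SimpleGraph

/-- A connected graph `G` of order `n` is recursively partitionable if and only if `G ≅ K₁`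
(i.e. `n = 1`), or for every pair of positive integers `a, b` with `a + b = n` there is a
partition `{A, B}` of the vertex set with `|A| = a`, `|B| = b` such that both induced
subgraphs are recursively partitionable. -/
theorem isRP_iff_binary {V : Type} [Fintype V] [DecidableEq V]
    (G : SimpleGraph V) (hG : G.Connected) :
    G.IsRP Finset.univ ↔
      (Fintype.card V = 1 ∨
        ∀ a b : ℕ, 0 < a → 0 < b → a + b = Fintype.card V →
          ∃ A : Finset V, A.card = a ∧ Aᶜ.card = b ∧ G.IsRP A ∧ G.IsRP Aᶜ) := by
  have hconn : (G.induce ((Finset.univ : Finset V) : Set V)).Connected := by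
    rw [Finset.coe_univ]
    exact G.induceUnivIso.connected_iff.mpr hG
  rw [SimpleGraph.isRP_iff_exists_split]
  simp only [hconn, true_and, Finset.card_univ, Finset.subset_univ,
    ← Finset.compl_eq_univ_sdiff]
end

section
/- Let G be a connected graph, S ⊆ V(G), and k ≥ 2 an integer. Suppose G has a partition of its vertex set into connected parts T_1,…,T_m with |T_i| = k for all i ≤ m−1 and |T_m| ≤ k. Then |S| + |V(G)|_k/(k−1) ≥ w_k(G,S), where |V(G)|_k denotes |V(G)| mod k and w_k(G,S) = (1/(k−1)) · Σ over components C of G−S of (|V(C)| mod k). -/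
/-! A connected part `T` avoiding `S` lies inside a single component of `G − S`. For a component
`C`, `|C| = Σ_T |C ∩ T|`, and a part of size `k` avoiding `S` contributes `0` or `k`, so `|C| mod k`
is at most the number of vertices of `C` in the remaining parts. Summed over all components, a
remaining part `T` contributes `|T \ S|`: at most `k − 1 ≤ (k − 1)|S ∩ T|` if `T` meets `S`, and
otherwise `T` is the short last part, contributing `|T| = |V| mod k`. -/

open Finset SimpleGraph Function

theorem List.sum_map_mod_of_dvd_dropLast {l : List ℕ} {k : ℕ} (h : ∀ n ∈ l.dropLast, k ∣ n) :
    (l.map (· % k)).sum = l.sum % k := by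
  obtain rfl | ⟨l, a, rfl⟩ := l.eq_nil_or_concat'
  · simp
  rw [List.dropLast_concat] at h
  have hmod : (l.map (· % k)).sum = 0 :=
    List.sum_eq_zero fun n hn => by
      obtain ⟨m, hm, rfl⟩ := List.mem_map.1 hn
      exact Nat.mod_eq_zero_of_dvd (h m hm)
  obtain ⟨q, hq⟩ := List.dvd_sum h
  simp [hmod, hq]

section ListPartition

variable {α : Type*} [DecidableEq α]

theorem mem_foldr_union {L : List (Finset α)} {a : α} :
    a ∈ L.foldr (· ∪ ·) ∅ ↔ ∃ T ∈ L, a ∈ T := by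
  induction L with
  | nil => simp
  | cons T L ih => simp [ih]

theorem card_inter_foldr_union {L : List (Finset α)} (hL : L.Pairwise Disjoint) (A : Finset α) :
    #(A ∩ L.foldr (· ∪ ·) ∅) = (L.map fun T => #(A ∩ T)).sum := by
  induction L with
  | nil => simp
  | cons T L ih =>
    rw [List.pairwise_cons] at hL
    have hT : Disjoint T (L.foldr (· ∪ ·) ∅) := disjoint_left.2 fun a haT haL => by
      obtain ⟨U, hU, haU⟩ := mem_foldr_union.1 haL
      exact disjoint_left.1 (hL.1 U hU) haT haU
    rw [List.foldr_cons, inter_union_distrib_left,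
      card_union_of_disjoint (hT.mono inter_subset_right inter_subset_right), ih hL.2,
      List.map_cons, List.sum_cons]

theorem card_sdiff_le_of_card_le {S T : Finset α} {k : ℕ} (hT : #T ≤ k)
    (h : ¬(Disjoint T S ∧ k ∣ #T)) : #(T \ S) ≤ (k - 1) * #(S ∩ T) + #T % k := by
  by_cases hTS : Disjoint T S
  · have hTk : #T < k := lt_of_le_of_ne hT fun hk => h ⟨hTS, hk ▸ dvd_rfl⟩
    rw [sdiff_eq_self_of_disjoint hTS, Nat.mod_eq_of_lt hTk]
    exact Nat.le_add_left _ _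
  · have hST : 0 < #(S ∩ T) := by
      rw [card_pos, ← not_disjoint_iff_nonempty_inter]
      exact fun h => hTS h.symm
    have hsplit := card_sdiff_add_card_inter T S
    rw [inter_comm] at hsplit
    calc #(T \ S) ≤ k - 1 := by omega
      _ ≤ (k - 1) * #(S ∩ T) := Nat.le_mul_of_pos_right _ hST
      _ ≤ _ := Nat.le_add_right _ _

variable [Fintype α] {L : List (Finset α)}

theorem card_eq_sum_card_inter (hL : L.Pairwise Disjoint) (hcover : L.foldr (· ∪ ·) ∅ = univ)
    (A : Finset α) : #A = (L.map fun T => #(A ∩ T)).sum := by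
  rw [← card_inter_foldr_union hL, hcover, inter_univ]

theorem card_mod_le_sum_card_inter (hL : L.Pairwise Disjoint) (hcover : L.foldr (· ∪ ·) ∅ = univ)
    (k : ℕ) (p : Finset α → Prop) [DecidablePred p] (B : Finset α)
    (hp : ∀ T ∈ L, p T → k ∣ #T ∧ (Disjoint B T ∨ T ⊆ B)) :
    #B % k ≤ (L.map fun T => if p T then 0 else #(B ∩ T)).sum := by
  have hmod : ∀ T ∈ L, #(B ∩ T) % k = (if p T then 0 else #(B ∩ T)) % k := by
    intro T hT
    split_ifs with hpT
    · obtain ⟨hk, hBT | hTB⟩ := hp T hT hpT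
      · rw [disjoint_iff_inter_eq_empty.1 hBT, card_empty]
      · rw [inter_eq_right.2 hTB, Nat.zero_mod, Nat.mod_eq_zero_of_dvd hk]
    · rfl
  calc #B % k = (L.map fun T => #(B ∩ T)).sum % k := by rw [← card_eq_sum_card_inter hL hcover]
    _ = (L.map fun T => if p T then 0 else #(B ∩ T)).sum % k := by
      rw [List.sum_nat_mod, List.sum_nat_mod (List.map (fun T => if p T then _ else _) L),
        List.map_map, List.map_map]
      exact congrArg (· % k) (congrArg List.sum (List.map_congr_left hmod))
    _ ≤ _ := Nat.mod_le _ _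

end ListPartition

section Blocks

variable {α ι : Type*} [DecidableEq α] [Fintype α] [Fintype ι]

theorem sum_card_inter_eq_card_sdiff {S : Finset α} {D : ι → Finset α}
    (hD : Pairwise (Disjoint on D)) (hDcover : univ.biUnion D = Sᶜ) (A : Finset α) :
    ∑ i, #(D i ∩ A) = #(A \ S) := by
  rw [sdiff_eq_inter_compl, ← hDcover, inter_biUnion, card_biUnion]
  · simp_rw [inter_comm]
  · exact fun i _ j _ hij => (hD hij).mono inter_subset_right inter_subset_right

theorem sum_card_block_mod_le {S : Finset α} {D : ι → Finset α}
    (hD : Pairwise (Disjoint on D)) (hDcover : univ.biUnion D = Sᶜ)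
    {P : List (Finset α)} (hdisj : P.Pairwise Disjoint) (hcover : P.foldr (· ∪ ·) ∅ = univ)
    {k : ℕ} (hle : ∀ T ∈ P, #T ≤ k) (hdvd : ∀ T ∈ P.dropLast, k ∣ #T)
    (hblock : ∀ T ∈ P, Disjoint T S → ∀ i, Disjoint (D i) T ∨ T ⊆ D i) :
    ∑ i, #(D i) % k ≤ (k - 1) * #S + Fintype.card α % k := by
  let p : Finset α → Prop := fun T => Disjoint T S ∧ k ∣ #T
  have hswap : ∑ i, (P.map fun T => if p T then 0 else #(D i ∩ T)).sum
      = (P.map fun T => if p T then 0 else #(T \ S)).sum := by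
    have hterm : ∀ T, (if p T then 0 else #(T \ S)) = ∑ i, if p T then 0 else #(D i ∩ T) := by
      intro T
      split_ifs
      · simp
      · exact (sum_card_inter_eq_card_sdiff hD hDcover T).symm
    simp_rw [hterm]
    simpa using Multiset.sum_map_sum_map (univ : Finset ι).val (P : Multiset (Finset α))
      (f := fun i T => if p T then 0 else #(D i ∩ T))
  calc ∑ i, #(D i) % k
      ≤ ∑ i, (P.map fun T => if p T then 0 else #(D i ∩ T)).sum :=
        sum_le_sum fun i _ => card_mod_le_sum_card_inter hdisj hcover k p (D i)
          fun T hT hpT => ⟨hpT.2, hblock T hT hpT.1 i⟩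
    _ = (P.map fun T => if p T then 0 else #(T \ S)).sum := hswap
    _ ≤ (P.map fun T => (k - 1) * #(S ∩ T) + #T % k).sum := by
        refine List.sum_le_sum fun T hT => ?_
        split_ifs with hpT
        · exact Nat.zero_le _
        · exact card_sdiff_le_of_card_le (hle T hT) hpT
    _ = (k - 1) * #S + Fintype.card α % k := by
        rw [List.sum_map_add, List.sum_map_mul_left, ← card_eq_sum_card_inter hdisj hcover,
          ← card_univ, card_eq_sum_card_inter hdisj hcover univ]
        simp only [univ_inter]
        rw [← List.sum_map_mod_of_dvd_dropLast, List.map_map]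
        · rfl
        · simpa [← List.map_dropLast] using hdvd

end Blocks

namespace SimpleGraph.ConnectedComponent

variable {V : Type*} [Fintype V] {G : SimpleGraph V} {W : Set V}

open Classical in
noncomputable def ambientSupp (C : (G.induce W).ConnectedComponent) : Finset V :=
  C.supp.toFinset.map (Embedding.subtype _)

theorem mem_ambientSupp {C : (G.induce W).ConnectedComponent} {v : V} :
    v ∈ C.ambientSupp ↔ ∃ h : v ∈ W, (G.induce W).connectedComponentMk ⟨v, h⟩ = C := by
  simp [ambientSupp]

theorem card_ambientSupp (C : (G.induce W).ConnectedComponent) :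
    #C.ambientSupp = Nat.card C.supp := by
  classical
  rw [ambientSupp, card_map, Nat.card_eq_card_toFinset]

theorem pairwise_disjoint_ambientSupp :
    Pairwise (Disjoint on fun C : (G.induce W).ConnectedComponent => C.ambientSupp) :=
  fun C C' hCC' => Finset.disjoint_left.2 fun v hv hv' => hCC' <| by
    obtain ⟨hvW, rfl⟩ := mem_ambientSupp.1 hv
    obtain ⟨_, rfl⟩ := mem_ambientSupp.1 hv'
    rfl

theorem biUnion_ambientSupp [DecidableEq V] [Fintype (G.induce W).ConnectedComponent] [Fintype W] :
    univ.biUnion (fun C : (G.induce W).ConnectedComponent => C.ambientSupp) = W.toFinset := by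
  ext v
  simp only [mem_biUnion, mem_univ, true_and, mem_ambientSupp, Set.mem_toFinset]
  exact ⟨fun ⟨_, hv, _⟩ => hv, fun hv => ⟨_, hv, rfl⟩⟩

theorem disjoint_or_subset_ambientSupp {T : Finset V} (hT : (G.induce ↑T).Connected)
    (hTW : ↑T ⊆ W) (C : (G.induce W).ConnectedComponent) :
    Disjoint C.ambientSupp T ∨ T ⊆ C.ambientSupp := by
  refine or_iff_not_imp_left.2 fun hCT u hu => ?_
  obtain ⟨v, hvC, hvT⟩ := not_disjoint_iff.1 hCT
  obtain ⟨hvW, rfl⟩ := mem_ambientSupp.1 hvC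
  have huv : (G.induce ↑T).Reachable ⟨u, hu⟩ ⟨v, hvT⟩ := hT.preconnected _ _
  exact mem_ambientSupp.2 ⟨hTW hu, ConnectedComponent.sound (huv.map (G.induceHomOfLE hTW).toHom)⟩

end SimpleGraph.ConnectedComponent

theorem one_div_sub_one_mul_le_add_div {a b c k : ℕ} (hk : 2 ≤ k) (h : a ≤ (k - 1) * b + c) :
    1 / ((k : ℚ) - 1) * a ≤ b + c / ((k : ℚ) - 1) := by
  have hk1 : (0 : ℚ) < k - 1 := by
    have : (2 : ℚ) ≤ k := by exact_mod_cast hk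
    linarith
  have hq : (a : ℚ) ≤ ((k : ℚ) - 1) * b + c := by
    have := (Nat.cast_le (α := ℚ)).2 h
    push_cast [Nat.cast_sub (by omega : 1 ≤ k)] at this
    exact this
  rw [one_div, inv_mul_le_iff₀ hk1, mul_add, mul_div_cancel₀ _ hk1.ne']
  exact hq

theorem modcut_lemma_general {V : Type} [Fintype V] [DecidableEq V]
    (G : SimpleGraph V) (S : Finset V) (k : ℕ) (hk : 2 ≤ k)
    (P : List (Finset V)) (hne : P ≠ [])
    (hdisj : P.Pairwise _root_.Disjoint)
    (hcover : P.foldr (· ∪ ·) ∅ = Finset.univ)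
    (hconn : ∀ T ∈ P, (G.induce (T : Set V)).Connected)
    (hsize : ∀ T ∈ P.dropLast, T.card = k)
    (hlast : 0 < (P.getLast hne).card ∧ (P.getLast hne).card ≤ k) :
    (1 / ((k : ℚ) - 1)) *
        ∑ᶠ C : (G.induce ((↑S : Set V)ᶜ)).ConnectedComponent,
          ((Nat.card C.supp % k : ℕ) : ℚ) ≤
      (S.card : ℚ) + ((Fintype.card V % k : ℕ) : ℚ) / ((k : ℚ) - 1) := by
  classical
  let _ : Fintype (G.induce ((↑S : Set V)ᶜ)).ConnectedComponent := Fintype.ofFinite _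
  have hle : ∀ T ∈ P, #T ≤ k := by
    intro T hT
    rw [← List.dropLast_append_getLast hne, List.mem_append, List.mem_singleton] at hT
    rcases hT with hT | rfl
    · exact (hsize T hT).le
    · exact hlast.2
  have hcomp := sum_card_block_mod_le (S := S) ConnectedComponent.pairwise_disjoint_ambientSupp
    (by rw [ConnectedComponent.biUnion_ambientSupp]; simp) hdisj hcover hle
    (fun T hT => hsize T hT ▸ dvd_rfl)
    (fun T hT hTS => ConnectedComponent.disjoint_or_subset_ambientSupp (hconn T hT)
      (Set.subset_compl_iff_disjoint_right.2 (disjoint_coe.2 hTS)))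
  simp only [ConnectedComponent.card_ambientSupp] at hcomp
  rw [finsum_eq_sum_of_fintype, ← Nat.cast_sum]
  exact one_div_sub_one_mul_le_add_div hk hcomp

/-- Let `G` be a connected graph, `S ⊆ V(G)` and `k ≥ 2`.  If the vertex set of `G` can be
partitioned into connected parts `T₁, …, T_m` with `|Tᵢ| = k` for all `i ≤ m − 1` and
`0 < |T_m| ≤ k`, then `|S| + (|V(G)| mod k)/(k−1) ≥ w_k(G,S)`, where
`w_k(G,S) = (1/(k−1)) · Σ_C (|V(C)| mod k)`, the sum ranging over the connected components
`C` of `G − S`. -/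
theorem modcut_lemma {V : Type} [Fintype V] [DecidableEq V]
    (G : SimpleGraph V) (hG : G.Connected) (S : Finset V) (k : ℕ) (hk : 2 ≤ k)
    (P : List (Finset V)) (hne : P ≠ [])
    (hdisj : P.Pairwise _root_.Disjoint)
    (hcover : P.foldr (· ∪ ·) ∅ = Finset.univ)
    (hconn : ∀ T ∈ P, (G.induce (T : Set V)).Connected)
    (hsize : ∀ T ∈ P.dropLast, T.card = k)
    (hlast : 0 < (P.getLast hne).card ∧ (P.getLast hne).card ≤ k) :
    (1 / ((k : ℚ) - 1)) *
        ∑ᶠ C : (G.induce ((↑S : Set V)ᶜ)).ConnectedComponent,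
          ((Nat.card C.supp % k : ℕ) : ℚ) ≤
      (S.card : ℚ) + ((Fintype.card V % k : ℕ) : ℚ) / ((k : ℚ) - 1) :=
  modcut_lemma_general G S k hk P hne hdisj hcover hconn hsize hlast
end

section
/- If G is a recursively partitionable graph, S ⊆ V(G), and k ≥ 2, then |S| + (|V(G)| mod k)/(k−1) ≥ (1/(k−1)) Σ_C (|V(C)| mod k), where the sum ranges over components C of G−S. -/
/-!
By the RP property, `V(G)` splits into connected parts, all of size `k` except at most one of
size `|V(G)| mod k`. A part of size `k` avoiding `S` lies inside a single component of `G - S`,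
so it does not change any component's size mod `k`; hence `Σ_C (|C| mod k)` is at most the number
of vertices outside `S` in the remaining parts. Those are the parts meeting `S` (at most `|S|`
parts of size at most `k` containing all of `S`, so at most `(k - 1)|S|` vertices outside `S`)
and the exceptional part.
-/

open Finset

theorem Finset.sum_mod_le_sum_filter_of_dvd {ι : Type*} {s : Finset ι} {f : ι → ℕ} {k : ℕ}
    (p : ι → Prop) [DecidablePred p] (h : ∀ i ∈ s, ¬p i → k ∣ f i) :
    (∑ i ∈ s, f i) % k ≤ ∑ i ∈ s with p i, f i := by
  obtain ⟨m, hm⟩ : k ∣ ∑ i ∈ s with ¬p i, f i :=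
    dvd_sum fun i hi ↦ h i (mem_filter.1 hi).1 (mem_filter.1 hi).2
  rw [← sum_filter_add_sum_filter_not s p, hm, Nat.add_mul_mod_self_left]
  exact Nat.mod_le _ _

theorem List.lt_sum_of_mem_s15 {l : List ℕ} (hpos : ∀ a ∈ l, 0 < a) (hlen : 2 ≤ l.length)
    {a : ℕ} (ha : a ∈ l) : a < l.sum := by
  have hrest : 1 ≤ (l.erase a).length := by
    rw [List.length_erase_of_mem ha]
    omega
  have := (l.erase a).length_le_sum_of_one_le fun b hb ↦ hpos b (List.mem_of_mem_erase hb)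
  rw [← List.sum_erase ha]
  omega

namespace Finpartition

variable {α : Type*} [DecidableEq α] {s : Finset α} (P : Finpartition s)

theorem sum_card_inter {t : Finset α} (ht : t ⊆ s) : ∑ B ∈ P.parts, #(B ∩ t) = #t := by
  rw [← (P.restrict ht).sum_card_parts, P.sum_restrict ht card card_empty]
  rfl

theorem sum_card_sdiff_add_card_le {S : Finset α} (hS : S ⊆ s) {k r : ℕ}
    (hle : ∀ B ∈ P.parts, #B ≤ k) (hsmall : ∑ B ∈ P.parts with #B ≠ k, #B ≤ r) :
    (∑ B ∈ P.parts with (¬Disjoint B S ∨ #B ≠ k), #(B \ S)) + #S ≤ k * #S + r := by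
  have hmeet : ∑ B ∈ P.parts with ¬Disjoint B S, #(B ∩ S) = #S := by
    rw [sum_filter_of_ne fun B _ h ↦ not_disjoint_iff_nonempty_inter.2 (card_ne_zero.1 h),
      P.sum_card_inter hS]
  have hmeet_le : ∑ B ∈ P.parts with ¬Disjoint B S, #B ≤ k * #S := by
    rw [← hmeet, mul_sum]
    gcongr with B hB
    obtain ⟨hBP, hBS⟩ := mem_filter.1 hB
    have : 1 ≤ #(B ∩ S) := card_pos.2 (not_disjoint_iff_nonempty_inter.1 hBS)
    calc #B ≤ k := hle B hBP
      _ ≤ k * #(B ∩ S) := Nat.le_mul_of_pos_right k this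
  have hsmall' : ∑ B ∈ P.parts with #B ≠ k, #(B \ S) ≤ r :=
    (sum_le_sum fun B _ ↦ card_le_card sdiff_subset).trans hsmall
  calc (∑ B ∈ P.parts with (¬Disjoint B S ∨ #B ≠ k), #(B \ S)) + #S
      ≤ (∑ B ∈ P.parts with ¬Disjoint B S, #(B \ S)) + (∑ B ∈ P.parts with #B ≠ k, #(B \ S))
          + #S := by
        rw [filter_or, ← sum_union_inter]
        exact Nat.add_le_add_right (Nat.le_add_right _ _) _
    _ = (∑ B ∈ P.parts with ¬Disjoint B S, #B) + ∑ B ∈ P.parts with #B ≠ k, #(B \ S) := by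
        rw [← hmeet, add_right_comm, ← sum_add_distrib]
        simp only [card_sdiff_add_card_inter]
    _ ≤ k * #S + r := add_le_add hmeet_le hsmall'

end Finpartition

def Nat.modPartition (n k : ℕ) : List ℕ :=
  List.replicate (n / k) k ++ if n % k = 0 then [] else [n % k]

namespace Nat

variable {n k a : ℕ}

theorem sum_modPartition : (modPartition n k).sum = n := by
  have := div_add_mod n k
  simp only [modPartition, List.sum_append, List.sum_replicate, smul_eq_mul]
  split_ifs <;> simp <;> grind

theorem mem_modPartition (ha : a ∈ modPartition n k) : a = k ∨ (a = n % k ∧ n % k ≠ 0) := by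
  simp only [modPartition, List.mem_append, List.mem_replicate] at ha
  split_ifs at ha <;> grind

theorem two_le_length_modPartition (hk : 0 < k) (hkn : k < n) :
    2 ≤ (modPartition n k).length := by
  have hdiv := div_add_mod n k
  have hq : 1 ≤ n / k := div_pos hkn.le hk
  simp only [modPartition, List.length_append, List.length_replicate]
  split_ifs with hr
  · by_contra! h
    rw [show n / k = 1 by simp at h; omega, hr] at hdiv
    omega
  · simp
    omega

theorem sum_filter_ne_modPartition_le : ((modPartition n k).filter (· ≠ k)).sum ≤ n % k := by
  simp only [modPartition, List.filter_append, List.filter_replicate, ne_eq, not_true_eq_false,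
    decide_false, Bool.false_eq_true, if_false, List.nil_append]
  split_ifs
  · simp
  · simp only [List.filter_cons, List.filter_nil]
    split_ifs <;> simp

end Nat

namespace SimpleGraph

variable {V : Type} [Fintype V] [DecidableEq V] {G : SimpleGraph V} {S : Finset V}

open Classical in
noncomputable def componentFinset (C : (G.induce (↑S : Set V)ᶜ).ConnectedComponent) :
    Finset V :=
  {v | ∃ h : v ∉ S, (G.induce (↑S : Set V)ᶜ).connectedComponentMk ⟨v, h⟩ = C}

theorem mem_componentFinset {C : (G.induce (↑S : Set V)ᶜ).ConnectedComponent} {v : V} :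
    v ∈ componentFinset C ↔
      ∃ h : v ∉ S, (G.induce (↑S : Set V)ᶜ).connectedComponentMk ⟨v, h⟩ = C := by
  simp [componentFinset]

theorem card_componentFinset (C : (G.induce (↑S : Set V)ᶜ).ConnectedComponent) :
    #(componentFinset C) = Nat.card C.supp := by
  have himage : (componentFinset C : Set V) = Subtype.val '' C.supp := by
    ext v
    simp [mem_componentFinset]
  rw [← Nat.card_image_of_injective Subtype.val_injective, ← himage, Nat.card_coe_set_eq,
    Set.ncard_coe_finset]

theorem disjoint_componentFinset {C D : (G.induce (↑S : Set V)ᶜ).ConnectedComponent}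
    (h : C ≠ D) : Disjoint (componentFinset C) (componentFinset D) := by
  refine Finset.disjoint_left.2 fun v hC hD ↦ h ?_
  obtain ⟨_, rfl⟩ := mem_componentFinset.1 hC
  obtain ⟨_, rfl⟩ := mem_componentFinset.1 hD
  rfl

theorem sum_card_inter_componentFinset
    [Fintype (G.induce (↑S : Set V)ᶜ).ConnectedComponent] (B : Finset V) :
    ∑ C : (G.induce (↑S : Set V)ᶜ).ConnectedComponent, #(B ∩ componentFinset C) = #(B \ S) := by
  rw [← card_biUnion fun C _ D _ h ↦
    (disjoint_componentFinset h).mono inter_subset_right inter_subset_right]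
  congr 1
  ext v
  simp [mem_componentFinset]

theorem exists_subset_componentFinset_of_connected {B : Finset V}
    (hB : (G.induce (B : Set V)).Connected) (hBS : Disjoint B S) :
    ∃ C : (G.induce (↑S : Set V)ᶜ).ConnectedComponent, B ⊆ componentFinset C := by
  obtain ⟨⟨v₀, hv₀⟩⟩ := hB.nonempty
  have hsub : (B : Set V) ⊆ (↑S : Set V)ᶜ := fun v hv ↦ Finset.disjoint_left.1 hBS hv
  refine ⟨(G.induce _).connectedComponentMk ⟨v₀, hsub hv₀⟩, fun v hv ↦
    mem_componentFinset.2 ⟨hsub hv, ConnectedComponent.eq.2 ?_⟩⟩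
  exact (hB.preconnected ⟨v, hv⟩ ⟨v₀, hv₀⟩).map (G.induceHomOfLE hsub).toHom

theorem card_componentFinset_mod_le {k : ℕ} (P : Finpartition (univ : Finset V))
    (hP : ∀ B ∈ P.parts, (G.induce (B : Set V)).Connected)
    (C : (G.induce (↑S : Set V)ᶜ).ConnectedComponent) :
    #(componentFinset C) % k ≤
      ∑ B ∈ P.parts with (¬Disjoint B S ∨ #B ≠ k), #(B ∩ componentFinset C) := by
  rw [← P.sum_card_inter (subset_univ (componentFinset C))]
  refine sum_mod_le_sum_filter_of_dvd _ fun B hB hgood ↦ ?_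
  simp only [not_or, not_not] at hgood
  obtain ⟨C', hC'⟩ := exists_subset_componentFinset_of_connected (hP B hB) hgood.1
  rcases eq_or_ne C' C with rfl | hne
  · rw [inter_eq_left.2 hC', hgood.2]
  · rw [disjoint_iff_inter_eq_empty.1 ((disjoint_componentFinset hne).mono_left hC'), card_empty]
    exact dvd_zero k

theorem finsum_card_supp_mod_add_card_le {k r : ℕ} (P : Finpartition (univ : Finset V))
    (hP : ∀ B ∈ P.parts, (G.induce (B : Set V)).Connected) (hle : ∀ B ∈ P.parts, #B ≤ k)
    (hsmall : ∑ B ∈ P.parts with #B ≠ k, #B ≤ r) :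
    (∑ᶠ C : (G.induce (↑S : Set V)ᶜ).ConnectedComponent, Nat.card C.supp % k) + #S ≤
      k * #S + r := by
  set H := G.induce (↑S : Set V)ᶜ
  have := Fintype.ofFinite H.ConnectedComponent
  rw [finsum_eq_sum_of_fintype]
  calc (∑ C : H.ConnectedComponent, Nat.card C.supp % k) + #S
      = (∑ C : H.ConnectedComponent, #(componentFinset C) % k) + #S := by
        simp only [card_componentFinset]
    _ ≤ (∑ C : H.ConnectedComponent,
          ∑ B ∈ P.parts with (¬Disjoint B S ∨ #B ≠ k), #(B ∩ componentFinset C)) + #S := by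
        gcongr with C
        exact card_componentFinset_mod_le P hP C
    _ = (∑ B ∈ P.parts with (¬Disjoint B S ∨ #B ≠ k), #(B \ S)) + #S := by
        rw [sum_comm, sum_congr rfl fun B _ ↦ sum_card_inter_componentFinset B]
    _ ≤ k * #S + r := P.sum_card_sdiff_add_card_le (subset_univ S) hle hsmall

end SimpleGraph

namespace SimpleGraph.IsRP

variable {V : Type} [DecidableEq V] {G : SimpleGraph V} {A : Finset V}

theorem connected (hA : G.IsRP A) : (G.induce (A : Set V)).Connected := by
  rw [IsRP] at hA
  rcases hA with hA | ⟨hA, -⟩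
  · obtain ⟨a, rfl⟩ := card_eq_one.1 hA
    rw [coe_singleton]
    exact Connected.of_subsingleton
  · exact hA

theorem exists_finpartition (hA : G.IsRP A) {l : List ℕ} (hpos : ∀ a ∈ l, 0 < a)
    (hlen : 2 ≤ l.length) (hsum : l.sum = #A) :
    ∃ P : Finpartition A, (∀ B ∈ P.parts, G.IsRP B) ∧ P.parts.val.map card = l := by
  have hlt : ∀ a ∈ l, a < #A := fun a ha ↦ hsum ▸ List.lt_sum_of_mem_s15 hpos hlen ha
  rw [IsRP] at hA
  rcases hA with hA | ⟨-, hpart⟩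
  · obtain ⟨a, ha⟩ := List.exists_mem_of_length_pos (by omega : 0 < l.length)
    have := hpos a ha
    have := hlt a ha
    omega
  obtain ⟨P, hmap, hdisj, hcover, hRP⟩ := hpart l hpos hlen hsum
  have hcard : ∀ B ∈ P, #B ∈ l := fun B hB ↦ hmap ▸ List.mem_map_of_mem hB
  have hne : ∀ B ∈ P, B.Nonempty := fun B hB ↦ card_pos.1 (hpos _ (hcard B hB))
  have hnodup : P.Nodup := List.Pairwise.imp_of_mem (R := Disjoint) (S := (· ≠ ·))
    (fun hB _ hBB' h ↦ (hne _ hB).ne_empty (disjoint_self.1 (h ▸ hBB'))) hdisj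
  refine ⟨⟨P.toFinset, ?_, ?_, ?_⟩, fun B hB ↦ ?_, ?_⟩
  · exact supIndep_iff_pairwiseDisjoint.2 fun B hB B' hB' h ↦
      hdisj.forall (List.mem_toFinset.1 hB) (List.mem_toFinset.1 hB') h
  · rw [← hcover, ← List.foldr_sup_eq_sup_toFinset]
    rfl
  · exact fun h ↦ not_nonempty_empty (hne _ (List.mem_toFinset.1 h))
  · rw [List.mem_toFinset] at hB
    exact hRP B hB (hlt _ (hcard B hB))
  · simp [List.toFinset_val, hnodup.dedup, hmap]

theorem exists_finpartition_mod (hA : G.IsRP A) {k : ℕ} (hk : 0 < k) :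
    ∃ P : Finpartition A, (∀ B ∈ P.parts, (G.induce (B : Set V)).Connected) ∧
      (∀ B ∈ P.parts, #B ≤ k) ∧ ∑ B ∈ P.parts with #B ≠ k, #B ≤ #A % k := by
  rcases le_or_gt #A k with hAk | hkA
  · have hA0 : A ≠ ∅ := by
      obtain ⟨⟨v, hv⟩⟩ := hA.connected.nonempty
      exact ne_empty_of_mem hv
    refine ⟨Finpartition.indiscrete hA0, ?_⟩
    simp only [Finpartition.indiscrete_parts, mem_singleton, forall_eq, hA.connected, hAk,
      true_and, sum_filter, sum_singleton]
    split_ifs with h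
    · rw [Nat.mod_eq_of_lt (lt_of_le_of_ne hAk h)]
    · exact Nat.zero_le _
  obtain ⟨P, hRP, hmap⟩ := hA.exists_finpartition (l := Nat.modPartition #A k)
    (fun a ha ↦ by rcases Nat.mem_modPartition ha with h | h <;> omega)
    (Nat.two_le_length_modPartition hk hkA) Nat.sum_modPartition
  have hcard : ∀ B ∈ P.parts, #B ∈ Nat.modPartition #A k := fun B hB ↦ by
    rw [← Multiset.mem_coe, ← hmap]
    exact Multiset.mem_map_of_mem _ hB
  refine ⟨P, fun B hB ↦ (hRP B hB).connected, fun B hB ↦ ?_, ?_⟩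
  · have := Nat.mod_lt #A hk
    rcases Nat.mem_modPartition (hcard B hB) with h | h <;> omega
  · calc ∑ B ∈ P.parts with #B ≠ k, #B
        = ((P.parts.val.map card).filter (· ≠ k)).sum := by
          rw [Multiset.filter_map]
          rfl
      _ ≤ #A % k := by
          rw [hmap, Multiset.filter_coe, Multiset.sum_coe]
          exact Nat.sum_filter_ne_modPartition_le

end SimpleGraph.IsRP

/-- If `G` is a recursively partitionable graph, `S ⊆ V(G)` and `k ≥ 2`, then
`|S| + (|V(G)| mod k)/(k−1) ≥ (1/(k−1)) · Σ_C (|V(C)| mod k)`, the sum ranging over the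
connected components `C` of `G − S`. -/
theorem modcut_of_isRP {V : Type} [Fintype V] [DecidableEq V]
    (G : SimpleGraph V) (hG : G.IsRP Finset.univ) (S : Finset V) (k : ℕ) (hk : 2 ≤ k) :
    (1 / ((k : ℚ) - 1)) *
        ∑ᶠ C : (G.induce ((↑S : Set V)ᶜ)).ConnectedComponent,
          ((Nat.card C.supp % k : ℕ) : ℚ) ≤
      (S.card : ℚ) + ((Fintype.card V % k : ℕ) : ℚ) / ((k : ℚ) - 1) := by
  obtain ⟨P, hconn, hle, hsmall⟩ := hG.exists_finpartition_mod (by omega : 0 < k)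
  have hcount := SimpleGraph.finsum_card_supp_mod_add_card_le (S := S) P hconn hle hsmall
  rw [card_univ] at hcount
  have hk1 : (0 : ℚ) < k - 1 := by
    have : (2 : ℚ) ≤ k := by exact_mod_cast hk
    linarith
  have hcountℚ : ∑ᶠ C : (G.induce ((↑S : Set V)ᶜ)).ConnectedComponent,
      ((Nat.card C.supp % k : ℕ) : ℚ) ≤ (k - 1) * S.card + (Fintype.card V % k : ℕ) := by
    rw [← Nat.cast_finsum]
    have := (Nat.cast_le (α := ℚ)).2 hcount
    push_cast at this ⊢
    linarith
  rw [one_div_mul_eq_div, div_le_iff₀ hk1, add_mul, div_mul_cancel₀ _ hk1.ne']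
  linarith
end
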